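/- arXiv:2206.11868 — 3 statements merged into one kernel-verified Lean document; each statement's English description precedes it below -/
import Mathlib

section
/- Let d ≥ 1, let j ∈ {1,…,d}, let δ ∈ (0, 1/2), and let (Ω_n, P_n), n ≥ 1, be probability spaces. Let X_n : Ω_n → ℝ^d be random vectors and β_n ∈ ℝ^d. Suppose L, H, U are pairwise disjoint subsets of {1,…,d} whose union is {1,…,d}, with H nonempty and |U| < j ≤ |U| + |H|, such that: (i) for every coordinate k and every C > 0, lim_{n→∞} P_n(|X_n(k) − β_n(k)| ≥ C·n^{−δ}) = 0; (ii) for every k ∈ L and m ∈ H, n^δ·(β_n(m) − β_n(k)) → ∞; and (iii) for every m ∈ H and k ∈ U, n^δ·(β_n(k) − β_n(m)) → ∞. Let ĵ_n : Ω_n → {1,…,d} be measurable random indices such that almost surely ĵ_n attains the j-th largest value of the random vector X_n, i.e., #{k : X_n(k) > X_n(ĵ_n)} < j and #{k : X_n(k) ≥ X_n(ĵ_n)} ≥ j. Then lim_{n→∞} P_n(ĵ_n ∈ H) = 1. -/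
open MeasureTheory Filter Topology
open scoped ENNReal

/-!
On the event that every coordinate of `Xₙ` is within `n^{-δ}` of `βₙ`, the separation
hypotheses (eventually larger than `2 n^{-δ}`) force the observed values to be ordered blockwise,
`L` below `H` below `U`. There, an index in `L` has at least `|H| + |U| ≥ j` strictly larger
coordinates and an index in `U` has at most `|U| < j` coordinates at least as large, so a
`j`-th largest index lies in `H`. The failure probability is at most the sum of the `d`
consistency probabilities, which tends to zero.
-/

section Rank

variable {ι : Type*} [Fintype ι]

def AttainsRank (x : ι → ℝ) (j : ℕ) (i : ι) : Prop :=
  (Finset.univ.filter (fun k => x i < x k)).card < j ∧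
    j ≤ (Finset.univ.filter (fun k => x i ≤ x k)).card

theorem AttainsRank.card_lt_of_forall_lt {x : ι → ℝ} {j : ℕ} {i : ι} (hi : AttainsRank x j i)
    {A : Finset ι} (hlt : ∀ k ∈ A, x i < x k) : A.card < j := by
  have hsub : A ⊆ Finset.univ.filter (fun k => x i < x k) := fun k hk => by simpa using hlt k hk
  exact (Finset.card_le_card hsub).trans_lt hi.1

theorem AttainsRank.le_card_of_forall_gt {x : ι → ℝ} {j : ℕ} {i : ι} (hi : AttainsRank x j i)
    {A : Finset ι} (hgt : ∀ k ∉ A, x k < x i) : j ≤ A.card := by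
  have hsub : Finset.univ.filter (fun k => x i ≤ x k) ⊆ A := fun k hk => by
    by_contra hkA
    simpa using (Finset.mem_filter.mp hk).2.trans_lt (hgt k hkA)
  exact hi.2.trans (Finset.card_le_card hsub)

theorem AttainsRank.mem_middle_of_blockwise_lt [DecidableEq ι] {x : ι → ℝ} {j : ℕ} {i : ι}
    (hi : AttainsRank x j i) {L H U : Finset ι} (hHU : Disjoint H U)
    (hunion : L ∪ H ∪ U = Finset.univ) (hHne : H.Nonempty)
    (hjU : U.card < j) (hjUH : j ≤ U.card + H.card)
    (hL_lt_H : ∀ k ∈ L, ∀ m ∈ H, x k < x m) (hH_lt_U : ∀ m ∈ H, ∀ k ∈ U, x m < x k) : i ∈ H := by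
  obtain ⟨m₀, hm₀⟩ := hHne
  have hL_lt_U : ∀ k ∈ L, ∀ u ∈ U, x k < x u := fun k hk u hu =>
    (hL_lt_H k hk m₀ hm₀).trans (hH_lt_U m₀ hm₀ u hu)
  have mem_blocks : ∀ k, k ∈ L ∨ k ∈ H ∨ k ∈ U := fun k => by
    simpa [← hunion, or_assoc] using Finset.mem_univ k
  rcases mem_blocks i with hiL | hiH | hiU
  · have hcard := hi.card_lt_of_forall_lt (A := H ∪ U) fun k hk => by
      rcases Finset.mem_union.mp hk with hkH | hkU
      exacts [hL_lt_H i hiL k hkH, hL_lt_U i hiL k hkU]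
    rw [Finset.card_union_of_disjoint hHU] at hcard
    omega
  · exact hiH
  · have hcard := hi.le_card_of_forall_gt (A := U) fun k hkU => by
      rcases mem_blocks k with hkL | hkH | hkU'
      exacts [hL_lt_U k hkL i hiU, hH_lt_U k hkH i hiU, absurd hkU' hkU]
    omega

end Rank

theorem lt_of_abs_sub_lt_of_two_mul_lt {x y a b ε : ℝ} (hx : |x - a| < ε) (hy : |y - b| < ε)
    (hab : 2 * ε < b - a) : x < y := by
  linarith [(abs_lt.mp hx).2, (abs_lt.mp hy).1]

theorem eventually_two_mul_rpow_neg_lt {g : ℕ → ℝ} {δ : ℝ}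
    (hg : Tendsto (fun n : ℕ => (n : ℝ) ^ δ * g n) atTop atTop) :
    ∀ᶠ n : ℕ in atTop, 2 * (n : ℝ) ^ (-δ) < g n := by
  filter_upwards [hg.eventually_gt_atTop 2, eventually_ge_atTop 1] with n hgn hn
  have hn₀ : (0 : ℝ) < n := by exact_mod_cast hn
  rw [Real.rpow_neg hn₀.le, ← div_eq_mul_inv, div_lt_iff₀ (Real.rpow_pos_of_pos hn₀ δ)]
  linarith [mul_comm (g n) ((n : ℝ) ^ δ)]

theorem tendsto_measure_one_of_tendsto_measure_compl {ι : Type*} {l : Filter ι}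
    {Ω : ι → Type*} [∀ i, MeasurableSpace (Ω i)] {P : ∀ i, Measure (Ω i)}
    [∀ i, IsProbabilityMeasure (P i)] {A : ∀ i, Set (Ω i)}
    (h : Tendsto (fun i => P i (A i)ᶜ) l (𝓝 0)) : Tendsto (fun i => P i (A i)) l (𝓝 1) := by
  have hlower : ∀ i, 1 - P i (A i)ᶜ ≤ P i (A i) := fun i => by
    rw [tsub_le_iff_right, ← measure_univ (μ := P i), ← Set.union_compl_self (A i)]
    exact measure_union_le _ _
  have hsub : Tendsto (fun i => 1 - P i (A i)ᶜ) l (𝓝 1) := by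
    simpa using ENNReal.Tendsto.sub tendsto_const_nhds h (Or.inl ENNReal.one_ne_top)
  exact tendsto_of_tendsto_of_tendsto_of_le_of_le hsub tendsto_const_nhds hlower
    fun i => prob_le_one

theorem observed_jth_largest_in_near_tie_set_general
    (d : ℕ) (j : ℕ)
    (δ : ℝ)
    (Ω : ℕ → Type*) [∀ n, MeasurableSpace (Ω n)]
    (P : ∀ n, Measure (Ω n)) [∀ n, IsProbabilityMeasure (P n)]
    (X : ∀ n, Ω n → Fin d → ℝ)
    (β : ℕ → Fin d → ℝ)
    (L H U : Finset (Fin d))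
    (hHU : Disjoint H U)
    (hunion : L ∪ H ∪ U = Finset.univ) (hHne : H.Nonempty)
    (hjU : U.card < j) (hjUH : j ≤ U.card + H.card)
    (hcons : ∀ k : Fin d, ∀ C : ℝ, 0 < C →
      Tendsto (fun n : ℕ => P n {ω | C * (n : ℝ) ^ (-δ) ≤ |X n ω k - β n k|})
        atTop (𝓝 0))
    (hsepLH : ∀ k ∈ L, ∀ m ∈ H,
      Tendsto (fun n : ℕ => (n : ℝ) ^ δ * (β n m - β n k)) atTop atTop)
    (hsepHU : ∀ m ∈ H, ∀ k ∈ U,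
      Tendsto (fun n : ℕ => (n : ℝ) ^ δ * (β n k - β n m)) atTop atTop)
    (jhat : ∀ n, Ω n → Fin d)
    (hrank : ∀ n, ∀ᵐ ω ∂(P n),
      (Finset.univ.filter (fun k => X n ω (jhat n ω) < X n ω k)).card < j ∧
      j ≤ (Finset.univ.filter (fun k => X n ω (jhat n ω) ≤ X n ω k)).card) :
    Tendsto (fun n : ℕ => P n {ω | jhat n ω ∈ H}) atTop (𝓝 1) := by
  have hsep : ∀ᶠ n : ℕ in atTop,
      (∀ k ∈ L, ∀ m ∈ H, 2 * (n : ℝ) ^ (-δ) < β n m - β n k) ∧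
        ∀ m ∈ H, ∀ k ∈ U, 2 * (n : ℝ) ^ (-δ) < β n k - β n m := by
    simp only [eventually_and, eventually_all_finset]
    exact ⟨fun k hk m hm => eventually_two_mul_rpow_neg_lt (hsepLH k hk m hm),
      fun m hm k hk => eventually_two_mul_rpow_neg_lt (hsepHU m hm k hk)⟩
  have hbound : ∀ᶠ n : ℕ in atTop, P n {ω | jhat n ω ∈ H}ᶜ ≤
      ∑ k, P n {ω | 1 * (n : ℝ) ^ (-δ) ≤ |X n ω k - β n k|} := by
    filter_upwards [hsep] with n ⟨hgapLH, hgapHU⟩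
    refine (measure_mono_ae ?_).trans (measure_iUnion_fintype_le _ _)
    filter_upwards [hrank n] with ω hω
    show jhat n ω ∉ H → ω ∈ ⋃ k, {ω | 1 * (n : ℝ) ^ (-δ) ≤ |X n ω k - β n k|}
    intro hωH
    by_contra hclose
    simp only [Set.mem_iUnion, Set.mem_ofPred_eq, one_mul, not_exists, not_le] at hclose
    exact hωH (AttainsRank.mem_middle_of_blockwise_lt hω hHU hunion hHne hjU hjUH
      (fun k hk m hm => lt_of_abs_sub_lt_of_two_mul_lt (hclose k) (hclose m) (hgapLH k hk m hm))
      (fun m hm k hk => lt_of_abs_sub_lt_of_two_mul_lt (hclose m) (hclose k) (hgapHU m hm k hk)))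
  refine tendsto_measure_one_of_tendsto_measure_compl
    (tendsto_of_tendsto_of_tendsto_of_le_of_le' tendsto_const_nhds ?_
      (Eventually.of_forall fun n => zero_le) hbound)
  simpa using tendsto_finsetSum Finset.univ fun k _ => hcons k 1 one_pos

/-- Under coordinatewise `n^{−δ}`-rate consistency and separation of the
blocks `L`, `H`, `U`, a measurable random index that a.s. attains the `j`-th largest
value of `Xₙ` lies in `H` with probability tending to one. -/
theorem observed_jth_largest_in_near_tie_set
    (d : ℕ) (hd : 1 ≤ d) (j : ℕ) (hj : 1 ≤ j) (hjd : j ≤ d)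
    (δ : ℝ) (hδ : δ ∈ Set.Ioo (0 : ℝ) (1/2))
    (Ω : ℕ → Type*) [∀ n, MeasurableSpace (Ω n)]
    (P : ∀ n, Measure (Ω n)) [∀ n, IsProbabilityMeasure (P n)]
    (X : ∀ n, Ω n → Fin d → ℝ) (hX : ∀ n, Measurable (X n))
    (β : ℕ → Fin d → ℝ)
    (L H U : Finset (Fin d))
    (hLH : Disjoint L H) (hLU : Disjoint L U) (hHU : Disjoint H U)
    (hunion : L ∪ H ∪ U = Finset.univ) (hHne : H.Nonempty)
    (hjU : U.card < j) (hjUH : j ≤ U.card + H.card)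
    (hcons : ∀ k : Fin d, ∀ C : ℝ, 0 < C →
      Tendsto (fun n : ℕ => P n {ω | C * (n : ℝ) ^ (-δ) ≤ |X n ω k - β n k|})
        atTop (𝓝 0))
    (hsepLH : ∀ k ∈ L, ∀ m ∈ H,
      Tendsto (fun n : ℕ => (n : ℝ) ^ δ * (β n m - β n k)) atTop atTop)
    (hsepHU : ∀ m ∈ H, ∀ k ∈ U,
      Tendsto (fun n : ℕ => (n : ℝ) ^ δ * (β n k - β n m)) atTop atTop)
    (jhat : ∀ n, Ω n → Fin d) (hjhat : ∀ n, Measurable (jhat n))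
    (hrank : ∀ n, ∀ᵐ ω ∂(P n),
      (Finset.univ.filter (fun k => X n ω (jhat n ω) < X n ω k)).card < j ∧
      j ≤ (Finset.univ.filter (fun k => X n ω (jhat n ω) ≤ X n ω k)).card) :
    Tendsto (fun n : ℕ => P n {ω | jhat n ω ∈ H}) atTop (𝓝 1) :=
  observed_jth_largest_in_near_tie_set_general d j δ Ω P X β L H U hHU hunion hHne hjU hjUH hcons
    hsepLH hsepHU jhat hrank
end

section
/- Let d ≥ 1, let j ∈ {1,…,d}, let δ ∈ (0, 1/2), and let (Ω_n, P_n), n ≥ 1, be probability spaces. Let X_n : Ω_n → ℝ^d be random vectors and β_n ∈ ℝ^d. Suppose L, H, U are pairwise disjoint subsets of {1,…,d} whose union is {1,…,d}, with H nonempty and |U| < j ≤ |U| + |H|, such that: (i) for every coordinate k and every C > 0, lim_{n→∞} P_n(|X_n(k) − β_n(k)| ≥ C·n^{−δ}) = 0; (ii) for every k ∈ L and m ∈ H, n^δ·(β_n(m) − β_n(k)) → ∞; and (iii) for every m ∈ H and k ∈ U, n^δ·(β_n(k) − β_n(m)) → ∞. Let ĵ_n : Ω_n → {1,…,d} be measurable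 random indices such that almost surely #{k : X_n(k) > X_n(ĵ_n)} < j and #{k : X_n(k) ≥ X_n(ĵ_n)} ≥ j. Then for every coordinate k ∉ H and every C > 0, lim_{n→∞} P_n(|X_n(k) − X_n(ĵ_n)| < C·n^{−δ}) = 0. -/
open MeasureTheory Filter Topology

/-
With probability tending to one every coordinate of `X n` lies within `n^{-δ}` of `β n`, and
then the gaps of size `(C + 2) n^{-δ}` between the blocks `L < H < U` of `β n` survive in
`X n` with size `C n^{-δ}`. Whenever `L < H < U` holds with strict gaps in `X n`, an index
attaining the `j`-th largest value must lie in `H`: at least `#H + #U ≥ j` values lie strictly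
above any index of `L`, and at most `#U < j` values lie weakly above any index of `U`. Hence
on that event every coordinate outside `H` is at distance at least `C n^{-δ}` from `X n (ĵ n)`.
-/

section Rank

open Finset

variable {ι α : Type*} [Fintype ι] [LinearOrder α]

def AttainsRthLargest (x : ι → α) (r : ℕ) (i : ι) : Prop :=
  #{k | x i < x k} < r ∧ r ≤ #{k | x i ≤ x k}

theorem mem_or_mem_or_mem_of_union_eq_univ [DecidableEq ι] {L H U : Finset ι}
    (hunion : L ∪ H ∪ U = univ) (a : ι) : a ∈ L ∨ a ∈ H ∨ a ∈ U := by
  have ha : a ∈ L ∪ H ∪ U := hunion ▸ mem_univ a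
  simpa only [mem_union, or_assoc] using ha

theorem AttainsRthLargest.mem_middle [DecidableEq ι] {x : ι → α} {r : ℕ} {i : ι}
    (hi : AttainsRthLargest x r i) {L H U : Finset ι} (hHU : Disjoint H U)
    (hunion : L ∪ H ∪ U = univ) (hrU : #U < r) (hrUH : r ≤ #U + #H)
    (hxLH : ∀ k ∈ L, ∀ m ∈ H, x k < x m) (hxHU : ∀ m ∈ H, ∀ k ∈ U, x m < x k) :
    i ∈ H := by
  obtain ⟨m, hm⟩ : H.Nonempty := card_pos.1 (by omega)
  rcases mem_or_mem_or_mem_of_union_eq_univ hunion i with hiL | hiH | hiU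
  · have hsub : H ∪ U ⊆ ({k | x i < x k} : Finset ι) := by
      intro a ha
      rw [mem_filter_univ]
      rcases mem_union.1 ha with haH | haU
      · exact hxLH i hiL a haH
      · exact (hxLH i hiL m hm).trans (hxHU m hm a haU)
    have := card_le_card hsub
    rw [card_union_of_disjoint hHU] at this
    exact absurd hi.1 (by omega)
  · exact hiH
  · have hsub : ({k | x i ≤ x k} : Finset ι) ⊆ U := by
      intro a ha
      rw [mem_filter_univ] at ha
      rcases mem_or_mem_or_mem_of_union_eq_univ hunion a with haL | haH | haU
      · exact absurd ((hxLH a haL m hm).trans (hxHU m hm i hiU)) ha.not_gt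
      · exact absurd (hxHU a haH i hiU) ha.not_gt
      · exact haU
    exact absurd (hi.2.trans (card_le_card hsub)) (by omega)

theorem AttainsRthLargest.le_abs_sub [DecidableEq ι] {x : ι → ℝ} {r : ℕ} {i : ι}
    (hi : AttainsRthLargest x r i) {L H U : Finset ι} (hHU : Disjoint H U)
    (hunion : L ∪ H ∪ U = univ) (hrU : #U < r) (hrUH : r ≤ #U + #H) {c : ℝ} (hc : 0 ≤ c)
    (hxLH : ∀ k ∈ L, ∀ m ∈ H, x k + c < x m) (hxHU : ∀ m ∈ H, ∀ k ∈ U, x m + c < x k)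
    {k : ι} (hk : k ∉ H) : c ≤ |x k - x i| := by
  have hiH : i ∈ H := hi.mem_middle hHU hunion hrU hrUH
    (fun k hk m hm => (le_add_of_nonneg_right hc).trans_lt (hxLH k hk m hm))
    (fun m hm k hk => (le_add_of_nonneg_right hc).trans_lt (hxHU m hm k hk))
  rcases mem_or_mem_or_mem_of_union_eq_univ hunion k with hkL | hkH | hkU
  · rw [abs_sub_comm]
    exact le_abs.2 (Or.inl (by linarith [hxLH k hkL i hiH]))
  · exact absurd hkH hk
  · exact le_abs.2 (Or.inl (by linarith [hxHU i hiH k hkU]))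

end Rank

theorem add_mul_lt_of_abs_sub_lt {ι : Type*} {x b : ι → ℝ} {t : ℝ} (hx : ∀ i, |x i - b i| < t)
    {c : ℝ} {k m : ι} (hb : (c + 2) * t < b m - b k) : x k + c * t < x m := by
  have hk := (abs_lt.1 (hx k)).2
  have hm := (abs_lt.1 (hx m)).1
  linarith

theorem eventually_mul_rpow_neg_lt {f : ℕ → ℝ} {δ : ℝ}
    (hf : Tendsto (fun n : ℕ => (n : ℝ) ^ δ * f n) atTop atTop) (a : ℝ) :
    ∀ᶠ n : ℕ in atTop, a * (n : ℝ) ^ (-δ) < f n := by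
  filter_upwards [hf.eventually_gt_atTop a, eventually_gt_atTop 0] with n hfn hn
  have hpos : 0 < (n : ℝ) ^ δ := by positivity
  rwa [Real.rpow_neg n.cast_nonneg, ← div_eq_mul_inv, div_lt_iff₀' hpos]

theorem tendsto_measure_zero_of_ae_imp_exists {κ ι : Type*} [Fintype ι] {l : Filter κ}
    {Ω : κ → Type*} [∀ n, MeasurableSpace (Ω n)] {P : ∀ n, Measure (Ω n)}
    {A : ∀ n, Set (Ω n)} {B : ι → ∀ n, Set (Ω n)}
    (hB : ∀ i, Tendsto (fun n => P n (B i n)) l (𝓝 0))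
    (hA : ∀ᶠ n in l, ∀ᵐ ω ∂P n, ω ∈ A n → ∃ i, ω ∈ B i n) :
    Tendsto (fun n => P n (A n)) l (𝓝 0) := by
  have hsum : Tendsto (fun n => ∑ i, P n (B i n)) l (𝓝 0) := by
    simpa using tendsto_finsetSum Finset.univ fun i _ => hB i
  refine tendsto_of_tendsto_of_tendsto_of_le_of_le' tendsto_const_nhds hsum
    (Eventually.of_forall fun n => zero_le) ?_
  filter_upwards [hA] with n hn
  calc P n (A n) ≤ P n (⋃ i, B i n) :=
        measure_mono_ae (hn.mono fun ω hω h => Set.mem_iUnion.2 (hω h))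
    _ ≤ ∑ i, P n (B i n) := measure_iUnion_fintype_le _ _

theorem coordinates_outside_near_tie_set_separated_general
    (d : ℕ) (j : ℕ)
    (δ : ℝ)
    (Ω : ℕ → Type*) [∀ n, MeasurableSpace (Ω n)]
    (P : ∀ n, Measure (Ω n))
    (X : ∀ n, Ω n → Fin d → ℝ)
    (β : ℕ → Fin d → ℝ)
    (L H U : Finset (Fin d))
    (hHU : Disjoint H U)
    (hunion : L ∪ H ∪ U = Finset.univ)
    (hjU : U.card < j) (hjUH : j ≤ U.card + H.card)
    (hcons : ∀ k : Fin d, ∀ C : ℝ, 0 < C →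
      Tendsto (fun n : ℕ => P n {ω | C * (n : ℝ) ^ (-δ) ≤ |X n ω k - β n k|})
        atTop (𝓝 0))
    (hsepLH : ∀ k ∈ L, ∀ m ∈ H,
      Tendsto (fun n : ℕ => (n : ℝ) ^ δ * (β n m - β n k)) atTop atTop)
    (hsepHU : ∀ m ∈ H, ∀ k ∈ U,
      Tendsto (fun n : ℕ => (n : ℝ) ^ δ * (β n k - β n m)) atTop atTop)
    (jhat : ∀ n, Ω n → Fin d)
    (hrank : ∀ n, ∀ᵐ ω ∂(P n),
      (Finset.univ.filter (fun k => X n ω (jhat n ω) < X n ω k)).card < j ∧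
      j ≤ (Finset.univ.filter (fun k => X n ω (jhat n ω) ≤ X n ω k)).card) :
    ∀ k : Fin d, k ∉ H → ∀ C : ℝ, 0 < C →
      Tendsto (fun n : ℕ =>
          P n {ω | |X n ω k - X n ω (jhat n ω)| < C * (n : ℝ) ^ (-δ)})
        atTop (𝓝 0) := by
  intro k hk C hC
  refine tendsto_measure_zero_of_ae_imp_exists (fun i => hcons i 1 one_pos) ?_
  have hgapLH : ∀ᶠ n : ℕ in atTop, ∀ k ∈ L, ∀ m ∈ H,
      (C + 2) * (n : ℝ) ^ (-δ) < β n m - β n k :=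
    L.eventually_all.2 fun k hk => H.eventually_all.2 fun m hm =>
      eventually_mul_rpow_neg_lt (hsepLH k hk m hm) _
  have hgapHU : ∀ᶠ n : ℕ in atTop, ∀ m ∈ H, ∀ k ∈ U,
      (C + 2) * (n : ℝ) ^ (-δ) < β n k - β n m :=
    H.eventually_all.2 fun m hm => U.eventually_all.2 fun k hk =>
      eventually_mul_rpow_neg_lt (hsepHU m hm k hk) _
  filter_upwards [hgapLH, hgapHU] with n hβLH hβHU
  filter_upwards [hrank n] with ω (hj : AttainsRthLargest (X n ω) j (jhat n ω)) hnear
  by_contra! hclose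
  have hclose' : ∀ i, |X n ω i - β n i| < (n : ℝ) ^ (-δ) := fun i => by
    simpa using hclose i
  refine (not_le.2 hnear) (hj.le_abs_sub hHU hunion hjU hjUH (by positivity)
    (fun a ha b hb => ?_) (fun a ha b hb => ?_) hk)
  · exact add_mul_lt_of_abs_sub_lt hclose' (hβLH a ha b hb)
  · exact add_mul_lt_of_abs_sub_lt hclose' (hβHU a ha b hb)

/-- Under the same setup as Statement 4, coordinates outside the near-tie
set `H` are eventually farther than `C·n^{−δ}` from the observed `j`-th largest value,
with probability tending to one. -/
theorem coordinates_outside_near_tie_set_separated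
    (d : ℕ) (hd : 1 ≤ d) (j : ℕ) (hj : 1 ≤ j) (hjd : j ≤ d)
    (δ : ℝ) (hδ : δ ∈ Set.Ioo (0 : ℝ) (1/2))
    (Ω : ℕ → Type*) [∀ n, MeasurableSpace (Ω n)]
    (P : ∀ n, Measure (Ω n)) [∀ n, IsProbabilityMeasure (P n)]
    (X : ∀ n, Ω n → Fin d → ℝ) (hX : ∀ n, Measurable (X n))
    (β : ℕ → Fin d → ℝ)
    (L H U : Finset (Fin d))
    (hLH : Disjoint L H) (hLU : Disjoint L U) (hHU : Disjoint H U)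
    (hunion : L ∪ H ∪ U = Finset.univ) (hHne : H.Nonempty)
    (hjU : U.card < j) (hjUH : j ≤ U.card + H.card)
    (hcons : ∀ k : Fin d, ∀ C : ℝ, 0 < C →
      Tendsto (fun n : ℕ => P n {ω | C * (n : ℝ) ^ (-δ) ≤ |X n ω k - β n k|})
        atTop (𝓝 0))
    (hsepLH : ∀ k ∈ L, ∀ m ∈ H,
      Tendsto (fun n : ℕ => (n : ℝ) ^ δ * (β n m - β n k)) atTop atTop)
    (hsepHU : ∀ m ∈ H, ∀ k ∈ U,
      Tendsto (fun n : ℕ => (n : ℝ) ^ δ * (β n k - β n m)) atTop atTop)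
    (jhat : ∀ n, Ω n → Fin d) (hjhat : ∀ n, Measurable (jhat n))
    (hrank : ∀ n, ∀ᵐ ω ∂(P n),
      (Finset.univ.filter (fun k => X n ω (jhat n ω) < X n ω k)).card < j ∧
      j ≤ (Finset.univ.filter (fun k => X n ω (jhat n ω) ≤ X n ω k)).card) :
    ∀ k : Fin d, k ∉ H → ∀ C : ℝ, 0 < C →
      Tendsto (fun n : ℕ =>
          P n {ω | |X n ω k - X n ω (jhat n ω)| < C * (n : ℝ) ^ (-δ)})
        atTop (𝓝 0) :=
  coordinates_outside_near_tie_set_separated_general d j δ Ω P X β L H U hHU hunion hjU hjUH hcons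
    hsepLH hsepHU jhat hrank
end

section
/- Let d ≥ 1, let j ∈ {1,…,d}, let δ ∈ (0, 1/2), and let (Ω_n, P_n), n ≥ 1, be probability spaces. Let X_n : Ω_n → ℝ^d be random vectors and β_n ∈ ℝ^d. Suppose L, H, U are pairwise disjoint subsets of {1,…,d} whose union is {1,…,d}, with H nonempty and |U| < j ≤ |U| + |H|, such that: (i) for every coordinate k and every C > 0, lim_{n→∞} P_n(|X_n(k) − β_n(k)| ≥ C·n^{−δ}) = 0; (ii) for every k ∈ L and m ∈ H, n^δ·(β_n(m) − β_n(k)) → ∞; (iii) for every m ∈ H and k ∈ U, n^δ·(β_n(k) − β_n(m)) → ∞; and (iv) for every pair k, m ∈ H, √n·(β_n(k) − β_n(m)) → 0 (the near-tie condition). Let ĵ_n : Ω_n → {1,…,d} be measurable random indices such that almost surely #{k : X_n(k) > X_n(ĵ_n)} < j and #{k : X_n(k) ≥ X_n(ĵ_n)} ≥ j. Fix constants c_L, c_R > 0 and define the (random) estimated near-tie set Ĥ_n(ω) = {k : −c_L·n^{−δ} ≤ X_n(k)(ω) − X_n(ĵ_n(ω))(ω) ≤ c_R·n^{−δ}}.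 Then for every coordinate k and every ε > 0, lim_{n→∞} P_n(|𝟙(k ∈ Ĥ_n) − 𝟙(k ∈ H)| > ε) = 0; that is, P_n(k ∈ Ĥ_n) → 1 for every k ∈ H, and P_n(k ∈ Ĥ_n) → 0 for every k ∉ H. -/
/-!
Let `η = C n^{-δ}` with `C` a small fraction of `min c_L c_R`. On the event that every
coordinate of `Xₙ` is within `η` of `βₙ`, the separation conditions force `Xₙ` to keep the
order `L < H < U`, so the rank condition on `ĵₙ` places it in `H`. Around a point of `H` the
window `[-c_L n^{-δ}, c_R n^{-δ}]` then captures exactly `H`: the near-tie condition (with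
`δ < 1/2`) keeps the observations of `H` within `3η` of each other, and the separation
conditions push `L` and `U` out of the window. The complementary event is covered by the `d`
concentration tails `{|Xₙ(m) - βₙ(m)| ≥ η}`.
-/

open MeasureTheory Filter Topology

theorem tendsto_measure_zero_of_ae_subset_iUnion {α ι : Type*} [Fintype ι] {l : Filter α}
    {Ω : α → Type*} [∀ a, MeasurableSpace (Ω a)] {P : ∀ a, Measure (Ω a)}
    {A : ∀ a, Set (Ω a)} {B : ∀ a, ι → Set (Ω a)}
    (hB : ∀ i, Tendsto (fun a => P a (B a i)) l (𝓝 0))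
    (hAB : ∀ᶠ a in l, A a ≤ᵐ[P a] ⋃ i, B a i) :
    Tendsto (fun a => P a (A a)) l (𝓝 0) := by
  have hsum : Tendsto (fun a => ∑ i, P a (B a i)) l (𝓝 0) := by
    simpa using tendsto_finsetSum Finset.univ fun i _ => hB i
  refine tendsto_of_tendsto_of_tendsto_of_le_of_le' tendsto_const_nhds hsum
    (Eventually.of_forall fun _ => zero_le) ?_
  filter_upwards [hAB] with a ha
  exact (measure_mono_ae ha).trans (measure_iUnion_fintype_le _ _)

theorem eventually_abs_le_mul_rpow_neg_of_tendsto_sqrt_mul {x : ℕ → ℝ} {δ C : ℝ}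
    (hδ : δ ≤ 1 / 2) (hC : 0 < C)
    (hx : Tendsto (fun n : ℕ => Real.sqrt n * x n) atTop (𝓝 0)) :
    ∀ᶠ n : ℕ in atTop, |x n| ≤ C * (n : ℝ) ^ (-δ) := by
  filter_upwards [(NormedAddGroup.tendsto_nhds_zero.1 hx) C hC, eventually_ge_atTop 1]
    with n hsmall hn
  have hn1 : (1 : ℝ) ≤ n := by exact_mod_cast hn
  have hrpow_le_sqrt : (n : ℝ) ^ δ ≤ Real.sqrt n := by
    rw [Real.sqrt_eq_rpow]
    exact Real.rpow_le_rpow_of_exponent_le hn1 hδ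
  rw [Real.rpow_neg (Nat.cast_nonneg n), ← div_eq_mul_inv,
    le_div_iff₀ (Real.rpow_pos_of_pos (by linarith) δ), mul_comm]
  calc (n : ℝ) ^ δ * |x n| ≤ Real.sqrt n * |x n| := by gcongr
    _ = ‖Real.sqrt n * x n‖ := by
        rw [Real.norm_eq_abs, abs_mul, abs_of_nonneg (Real.sqrt_nonneg _)]
    _ ≤ C := hsmall.le

theorem eventually_mul_rpow_neg_le_of_tendsto_rpow_mul {x : ℕ → ℝ} {δ : ℝ} (D : ℝ)
    (hx : Tendsto (fun n : ℕ => (n : ℝ) ^ δ * x n) atTop atTop) :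
    ∀ᶠ n : ℕ in atTop, D * (n : ℝ) ^ (-δ) ≤ x n := by
  filter_upwards [hx.eventually_ge_atTop D, eventually_ge_atTop 1] with n hlarge hn
  have hn0 : (0 : ℝ) < n := by exact_mod_cast hn
  rw [Real.rpow_neg hn0.le, ← div_eq_mul_inv, div_le_iff₀ (Real.rpow_pos_of_pos hn0 δ),
    mul_comm]
  exact hlarge

theorem lt_of_abs_sub_lt_of_two_mul_le_sub {ι : Type*} {Y b : ι → ℝ} {η : ℝ} {i k : ι}
    (hi : |Y i - b i| < η) (hk : |Y k - b k| < η) (hgap : 2 * η ≤ b k - b i) : Y i < Y k := by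
  linarith [(abs_lt.1 hi).2, (abs_lt.1 hk).1]

section RankWindow

variable {ι : Type*} [Fintype ι] [DecidableEq ι] {Y b : ι → ℝ} {L H U : Finset ι}

theorem mem_middle_of_rank (hunion : L ∪ H ∪ U = Finset.univ) (hHU : Disjoint H U)
    (hLH_lt : ∀ l ∈ L, ∀ m ∈ H, Y l < Y m) (hHU_lt : ∀ m ∈ H, ∀ u ∈ U, Y m < Y u)
    {j : ℕ} (hjU : U.card < j) (hjUH : j ≤ U.card + H.card) {i : ι}
    (hgt : (Finset.univ.filter (fun k => Y i < Y k)).card < j)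
    (hge : j ≤ (Finset.univ.filter (fun k => Y i ≤ Y k)).card) : i ∈ H := by
  obtain ⟨m₀, hm₀⟩ : H.Nonempty := Finset.card_pos.1 (by omega)
  have hLU_lt : ∀ l ∈ L, ∀ u ∈ U, Y l < Y u := fun l hl u hu =>
    (hLH_lt l hl m₀ hm₀).trans (hHU_lt m₀ hm₀ u hu)
  have hi : i ∈ L ∪ H ∪ U := hunion ▸ Finset.mem_univ i
  simp only [Finset.mem_union] at hi
  rcases hi with (hiL | hiH) | hiU
  · have hsub : H ∪ U ⊆ Finset.univ.filter (fun k => Y i < Y k) := by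
      intro m hm
      rw [Finset.mem_filter]
      rcases Finset.mem_union.1 hm with hmH | hmU
      exacts [⟨Finset.mem_univ m, hLH_lt i hiL m hmH⟩,
        ⟨Finset.mem_univ m, hLU_lt i hiL m hmU⟩]
    have := Finset.card_le_card hsub
    rw [Finset.card_union_of_disjoint hHU] at this
    omega
  · exact hiH
  · have hsub : Finset.univ.filter (fun k => Y i ≤ Y k) ⊆ U := by
      intro m hm
      have hle := (Finset.mem_filter.1 hm).2
      have hm' : m ∈ L ∪ H ∪ U := hunion ▸ Finset.mem_univ m
      simp only [Finset.mem_union] at hm'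
      rcases hm' with (hmL | hmH) | hmU
      · exact absurd hle (hLU_lt m hmL i hiU).not_ge
      · exact absurd hle (hHU_lt m hmH i hiU).not_ge
      · exact hmU
    have := Finset.card_le_card hsub
    omega

theorem mem_window_iff_of_mem_middle (hunion : L ∪ H ∪ U = Finset.univ)
    (hLH : Disjoint L H) (hHU : Disjoint H U) {η a r Δ : ℝ}
    (hnoise : ∀ m, |Y m - b m| < η) (hnear : ∀ m ∈ H, ∀ m' ∈ H, |b m - b m'| ≤ η)
    (hsepLH : ∀ l ∈ L, ∀ m ∈ H, Δ ≤ b m - b l)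
    (hsepHU : ∀ m ∈ H, ∀ u ∈ U, Δ ≤ b u - b m)
    (ha : 3 * η ≤ a) (hr : 3 * η ≤ r) (hΔa : a + 2 * η ≤ Δ) (hΔr : r + 2 * η ≤ Δ)
    {i : ι} (hi : i ∈ H) (k : ι) :
    (-a ≤ Y k - Y i ∧ Y k - Y i ≤ r) ↔ k ∈ H := by
  have hYi := abs_lt.1 (hnoise i)
  have hYk := abs_lt.1 (hnoise k)
  have hk : k ∈ L ∪ H ∪ U := hunion ▸ Finset.mem_univ k
  simp only [Finset.mem_union] at hk
  rcases hk with (hkL | hkH) | hkU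
  · have := hsepLH k hkL i hi
    simp only [Finset.disjoint_left.1 hLH hkL, iff_false, not_and_or, not_le]
    left; linarith
  · have := abs_le.1 (hnear k hkH i hi)
    simp only [hkH, iff_true]
    constructor <;> linarith
  · have := hsepHU i hi k hkU
    simp only [Finset.disjoint_right.1 hHU hkU, iff_false, not_and_or, not_le]
    right; linarith

theorem mem_window_iff_of_rank (hunion : L ∪ H ∪ U = Finset.univ)
    (hLH : Disjoint L H) (hHU : Disjoint H U) {η a r Δ : ℝ}
    (hnoise : ∀ m, |Y m - b m| < η) (hnear : ∀ m ∈ H, ∀ m' ∈ H, |b m - b m'| ≤ η)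
    (hsepLH : ∀ l ∈ L, ∀ m ∈ H, Δ ≤ b m - b l)
    (hsepHU : ∀ m ∈ H, ∀ u ∈ U, Δ ≤ b u - b m)
    (ha : 3 * η ≤ a) (hr : 3 * η ≤ r) (hΔa : a + 2 * η ≤ Δ) (hΔr : r + 2 * η ≤ Δ)
    {j : ℕ} (hjU : U.card < j) (hjUH : j ≤ U.card + H.card) {i : ι}
    (hgt : (Finset.univ.filter (fun k => Y i < Y k)).card < j)
    (hge : j ≤ (Finset.univ.filter (fun k => Y i ≤ Y k)).card) (k : ι) :
    (-a ≤ Y k - Y i ∧ Y k - Y i ≤ r) ↔ k ∈ H := by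
  have hη : 0 < η := (abs_nonneg _).trans_lt (hnoise i)
  have hgap : 2 * η ≤ Δ := by linarith
  have hiH : i ∈ H := mem_middle_of_rank hunion hHU
    (fun l hl m hm => lt_of_abs_sub_lt_of_two_mul_le_sub (hnoise l) (hnoise m)
      (hgap.trans (hsepLH l hl m hm)))
    (fun m hm u hu => lt_of_abs_sub_lt_of_two_mul_le_sub (hnoise m) (hnoise u)
      (hgap.trans (hsepHU m hm u hu)))
    hjU hjUH hgt hge
  exact mem_window_iff_of_mem_middle hunion hLH hHU hnoise hnear hsepLH hsepHU ha hr hΔa hΔr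
    hiH k

end RankWindow

theorem estimated_near_tie_set_consistent_general
    (d : ℕ) (j : ℕ)
    (δ : ℝ) (hδ : δ ∈ Set.Ioo (0 : ℝ) (1/2))
    (Ω : ℕ → Type*) [∀ n, MeasurableSpace (Ω n)]
    (P : ∀ n, Measure (Ω n))
    (X : ∀ n, Ω n → Fin d → ℝ)
    (β : ℕ → Fin d → ℝ)
    (L H U : Finset (Fin d))
    (hLH : Disjoint L H) (hHU : Disjoint H U)
    (hunion : L ∪ H ∪ U = Finset.univ)
    (hjU : U.card < j) (hjUH : j ≤ U.card + H.card)
    (hcons : ∀ k : Fin d, ∀ C : ℝ, 0 < C →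
      Tendsto (fun n : ℕ => P n {ω | C * (n : ℝ) ^ (-δ) ≤ |X n ω k - β n k|})
        atTop (𝓝 0))
    (hsepLH : ∀ k ∈ L, ∀ m ∈ H,
      Tendsto (fun n : ℕ => (n : ℝ) ^ δ * (β n m - β n k)) atTop atTop)
    (hsepHU : ∀ m ∈ H, ∀ k ∈ U,
      Tendsto (fun n : ℕ => (n : ℝ) ^ δ * (β n k - β n m)) atTop atTop)
    (hneartie : ∀ k ∈ H, ∀ m ∈ H,
      Tendsto (fun n : ℕ => Real.sqrt n * (β n k - β n m)) atTop (𝓝 0))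
    (jhat : ∀ n, Ω n → Fin d)
    (hrank : ∀ n, ∀ᵐ ω ∂(P n),
      (Finset.univ.filter (fun k => X n ω (jhat n ω) < X n ω k)).card < j ∧
      j ≤ (Finset.univ.filter (fun k => X n ω (jhat n ω) ≤ X n ω k)).card)
    (cL cR : ℝ) (hcL : 0 < cL) (hcR : 0 < cR) :
    ∀ k : Fin d, ∀ ε : ℝ, 0 < ε →
      Tendsto (fun n : ℕ =>
          P n {ω | ε <
            |(if -cL * (n : ℝ) ^ (-δ) ≤ X n ω k - X n ω (jhat n ω) ∧
                  X n ω k - X n ω (jhat n ω) ≤ cR * (n : ℝ) ^ (-δ)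
                then (1 : ℝ) else 0) -
              (if k ∈ H then (1 : ℝ) else 0)|})
        atTop (𝓝 0) := by
  intro k ε hε
  set C := min cL cR / 4 with hC_def
  set D := max cL cR + 2 * C with hD_def
  have hC : 0 < C := by positivity
  have hnear : ∀ᶠ n : ℕ in atTop,
      ∀ m ∈ H, ∀ m' ∈ H, |β n m - β n m'| ≤ C * (n : ℝ) ^ (-δ) := by
    simp_rw [eventually_all_finset]
    exact fun m hm m' hm' =>
      eventually_abs_le_mul_rpow_neg_of_tendsto_sqrt_mul hδ.2.le hC (hneartie m hm m' hm')
  have hL : ∀ᶠ n : ℕ in atTop,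
      ∀ l ∈ L, ∀ m ∈ H, D * (n : ℝ) ^ (-δ) ≤ β n m - β n l := by
    simp_rw [eventually_all_finset]
    exact fun l hl m hm => eventually_mul_rpow_neg_le_of_tendsto_rpow_mul D (hsepLH l hl m hm)
  have hU : ∀ᶠ n : ℕ in atTop,
      ∀ m ∈ H, ∀ u ∈ U, D * (n : ℝ) ^ (-δ) ≤ β n u - β n m := by
    simp_rw [eventually_all_finset]
    exact fun m hm u hu => eventually_mul_rpow_neg_le_of_tendsto_rpow_mul D (hsepHU m hm u hu)
  refine tendsto_measure_zero_of_ae_subset_iUnion (fun m => hcons m C hC) ?_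
  filter_upwards [hnear, hL, hU] with n hnear hL hU
  filter_upwards [hrank n] with ω ⟨hgt, hge⟩ hω
  by_contra hgood
  change ω ∉ ⋃ m, _ at hgood
  simp only [Set.mem_iUnion, Set.mem_ofPred_eq, not_exists, not_le] at hgood
  set t := (n : ℝ) ^ (-δ)
  have ht : 0 ≤ t := Real.rpow_nonneg (Nat.cast_nonneg n) _
  have hCa : 3 * C ≤ cL := by linarith [min_le_left cL cR]
  have hCr : 3 * C ≤ cR := by linarith [min_le_right cL cR]
  have hDa : cL + 2 * C ≤ D := by linarith [le_max_left cL cR]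
  have hDr : cR + 2 * C ≤ D := by linarith [le_max_right cL cR]
  have hwindow := mem_window_iff_of_rank (a := cL * t) (r := cR * t) hunion hLH hHU hgood
    hnear hL hU (by nlinarith) (by nlinarith) (by nlinarith) (by nlinarith) hjU hjUH hgt hge k
  rw [← neg_mul] at hwindow
  change ε < _ at hω
  simp only [hwindow, sub_self, abs_zero] at hω
  exact hε.not_gt hω

/-- Consistency of the estimated near-tie set: the indicator of
`k ∈ Ĥₙ` converges in probability to the indicator of `k ∈ H`, where
`Ĥₙ = {k : −c_L·n^{−δ} ≤ Xₙ(k) − Xₙ(ĵₙ) ≤ c_R·n^{−δ}}`. -/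
theorem estimated_near_tie_set_consistent
    (d : ℕ) (hd : 1 ≤ d) (j : ℕ) (hj : 1 ≤ j) (hjd : j ≤ d)
    (δ : ℝ) (hδ : δ ∈ Set.Ioo (0 : ℝ) (1/2))
    (Ω : ℕ → Type*) [∀ n, MeasurableSpace (Ω n)]
    (P : ∀ n, Measure (Ω n)) [∀ n, IsProbabilityMeasure (P n)]
    (X : ∀ n, Ω n → Fin d → ℝ) (hX : ∀ n, Measurable (X n))
    (β : ℕ → Fin d → ℝ)
    (L H U : Finset (Fin d))
    (hLH : Disjoint L H) (hLU : Disjoint L U) (hHU : Disjoint H U)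
    (hunion : L ∪ H ∪ U = Finset.univ) (hHne : H.Nonempty)
    (hjU : U.card < j) (hjUH : j ≤ U.card + H.card)
    (hcons : ∀ k : Fin d, ∀ C : ℝ, 0 < C →
      Tendsto (fun n : ℕ => P n {ω | C * (n : ℝ) ^ (-δ) ≤ |X n ω k - β n k|})
        atTop (𝓝 0))
    (hsepLH : ∀ k ∈ L, ∀ m ∈ H,
      Tendsto (fun n : ℕ => (n : ℝ) ^ δ * (β n m - β n k)) atTop atTop)
    (hsepHU : ∀ m ∈ H, ∀ k ∈ U,
      Tendsto (fun n : ℕ => (n : ℝ) ^ δ * (β n k - β n m)) atTop atTop)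
    (hneartie : ∀ k ∈ H, ∀ m ∈ H,
      Tendsto (fun n : ℕ => Real.sqrt n * (β n k - β n m)) atTop (𝓝 0))
    (jhat : ∀ n, Ω n → Fin d) (hjhat : ∀ n, Measurable (jhat n))
    (hrank : ∀ n, ∀ᵐ ω ∂(P n),
      (Finset.univ.filter (fun k => X n ω (jhat n ω) < X n ω k)).card < j ∧
      j ≤ (Finset.univ.filter (fun k => X n ω (jhat n ω) ≤ X n ω k)).card)
    (cL cR : ℝ) (hcL : 0 < cL) (hcR : 0 < cR) :
    ∀ k : Fin d, ∀ ε : ℝ, 0 < ε →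
      Tendsto (fun n : ℕ =>
          P n {ω | ε <
            |(if -cL * (n : ℝ) ^ (-δ) ≤ X n ω k - X n ω (jhat n ω) ∧
                  X n ω k - X n ω (jhat n ω) ≤ cR * (n : ℝ) ^ (-δ)
                then (1 : ℝ) else 0) -
              (if k ∈ H then (1 : ℝ) else 0)|})
        atTop (𝓝 0) :=
  estimated_near_tie_set_consistent_general d j δ hδ Ω P X β L H U hLH hHU hunion hjU hjUH hcons
    hsepLH hsepHU hneartie jhat hrank cL cR hcL hcR
end
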